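/- Let n ∈ ℕ, p ∈ (1, ∞), let (a_{jk}) be an n×n complex Hermitian matrix, and let d_1, …, d_n ≥ 0 satisfy Σ_k |a_{kj}| ≤ d_j for each j. Then for all c_1, …, c_n ∈ ℂ, the quantity Σ_j d_j·c_j·conj(F_p(c_j)) − Σ_{j,k} c_j·conj(F_p(c_k))·a_{kj} lies in the sector Σ_p. -/

import Mathlib

/-!
With `X_j = |c_j|^p`, the hermitian symmetry turns twice the form into
`∑_j 2 (d_j - ∑_k |a_kj|) X_j` plus, over all pairs `(j, k)`, the terms
`|a_kj| (X_j + X_k) - μ |c_k|^(p-2) - conj μ |c_j|^(p-2)` with `μ = a_kj c_j conj c_k`.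
The first sum is a nonnegative real. As `μ` runs over the circle `|μ| = |a_kj| |c_j| |c_k|`,
a pair term runs over an ellipse centred on the positive real axis, and this ellipse lies in the
sector of half-opening `arcsin |1 - 2/p|` because, writing `|c_j| / |c_k| = e^(2x)`,
`p |sinh((p-2)x)| ≤ |p-2| |sinh(px)|`, i.e. `sinh y / y` increases in `|y|` (convexity of `sinh`).
The sector is a convex cone, so it contains the whole sum.
-/

open Complex

noncomputable def Fp (p : ℝ) (z : ℂ) : ℂ :=
  if z = 0 then 0 else z * ((‖z‖ ^ (p - 2) : ℝ) : ℂ)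

def Sector (φ : ℝ) : Set ℂ := {z : ℂ | z = 0 ∨ |z.arg| ≤ φ}

open ComplexConjugate

namespace Real

lemma convexOn_sinh : ConvexOn ℝ (Set.Ici 0) sinh := by
  refine MonotoneOn.convexOn_of_deriv (convex_Ici 0) continuous_sinh.continuousOn
    differentiable_sinh.differentiableOn ?_
  rw [deriv_sinh, interior_Ici]
  intro x hx y hy hxy
  rw [cosh_le_cosh, abs_of_pos hx, abs_of_pos hy]
  exact hxy

lemma mul_sinh_le_mul_sinh {a b y : ℝ} (hb : 0 ≤ b) (hba : b ≤ a) (hy : 0 ≤ y) :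
    a * sinh (b * y) ≤ b * sinh (a * y) := by
  rcases (hb.trans hba).eq_or_lt with rfl | ha
  · simp [le_antisymm hba hb]
  have h := convexOn_sinh.2 (Set.self_mem_Ici (a := (0 : ℝ))) (mul_nonneg ha.le hy)
    (sub_nonneg.2 ((div_le_one ha).2 hba)) (div_nonneg hb ha.le) (sub_add_cancel _ _)
  simp only [smul_eq_mul, mul_zero, zero_add, sinh_zero] at h
  rw [show b / a * (a * y) = b * y by field_simp, div_mul_eq_mul_div, le_div_iff₀ ha] at h
  linarith

lemma sq_mul_sinh_sq_le {a b : ℝ} (hba : |b| ≤ a) (x : ℝ) :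
    a ^ 2 * sinh (b * x) ^ 2 ≤ b ^ 2 * sinh (a * x) ^ 2 := by
  have h := mul_sinh_le_mul_sinh (abs_nonneg b) hba (abs_nonneg x)
  have h0 : 0 ≤ a * sinh (|b| * |x|) :=
    mul_nonneg ((abs_nonneg b).trans hba) (sinh_nonneg_iff.2 (by positivity))
  rw [← sq_abs (sinh (b * x)), ← sq_abs (sinh (a * x)), ← sq_abs b, abs_sinh, abs_sinh,
    abs_mul, abs_mul, abs_of_nonneg ((abs_nonneg b).trans hba), ← mul_pow, ← mul_pow]
  exact pow_le_pow_left₀ h0 h 2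

lemma two_mul_exp_mul_sinh (a b : ℝ) : 2 * exp a * sinh b = exp (a + b) - exp (a - b) := by
  rw [sinh_eq, exp_add, exp_sub, exp_neg]
  ring

lemma two_mul_exp_mul_cosh (a b : ℝ) : 2 * exp a * cosh b = exp (a + b) + exp (a - b) := by
  rw [cosh_eq, exp_add, exp_sub, exp_neg]
  ring

lemma rpow_sub_one_mul_self {x : ℝ} (hx : 0 ≤ x) {r : ℝ} (hr : r ≠ 0) :
    x ^ (r - 1) * x = x ^ r := by
  rw [← rpow_add_one' hx (by simpa using hr), sub_add_cancel]

lemma rpow_sub_one_mul_add_le_rpow_add {p A B : ℝ} (hp : 1 < p) (hA : 0 ≤ A) (hB : 0 ≤ B) :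
    A ^ (p - 1) * B + A * B ^ (p - 1) ≤ A ^ p + B ^ p := by
  have hmono : 0 ≤ (A ^ (p - 1) - B ^ (p - 1)) * (A - B) := by
    rcases le_total A B with h | h
    · exact mul_nonneg_of_nonpos_of_nonpos
        (sub_nonpos.2 (rpow_le_rpow hA h (by linarith))) (sub_nonpos.2 h)
    · exact mul_nonneg (sub_nonneg.2 (rpow_le_rpow hB h (by linarith))) (sub_nonneg.2 h)
  rw [← rpow_sub_one_mul_self hA (by linarith : p ≠ 0),
    ← rpow_sub_one_mul_self hB (by linarith : p ≠ 0)]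
  linarith

lemma four_mul_sq_rpow_sub_le {p A B : ℝ} (hp : 1 < p) (hA : 0 ≤ A) (hB : 0 ≤ B) :
    4 * (p - 1) * (A ^ (p - 1) * B - A * B ^ (p - 1)) ^ 2 ≤
      (p - 2) ^ 2 * ((A ^ p + B ^ p) ^ 2 - (A ^ (p - 1) * B + A * B ^ (p - 1)) ^ 2) := by
  have hp0 : p ≠ 0 := by linarith
  have hp1 : p - 1 ≠ 0 := by linarith
  rcases hA.eq_or_lt with rfl | hA
  · rw [zero_rpow hp0, zero_rpow hp1]
    nlinarith [sq_nonneg ((p - 2) * B ^ p)]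
  rcases hB.eq_or_lt with rfl | hB
  · rw [zero_rpow hp0, zero_rpow hp1]
    nlinarith [sq_nonneg ((p - 2) * A ^ p)]
  -- with `A = e^(m + x)`, `B = e^(m - x)` each term is `e^(p m)` times a hyperbolic function of `x`
  obtain ⟨m, x, rfl, rfl⟩ : ∃ m x, A = exp (m + x) ∧ B = exp (m - x) :=
    ⟨(log A + log B) / 2, (log A - log B) / 2, by ring_nf; exact (exp_log hA).symm,
      by ring_nf; exact (exp_log hB).symm⟩
  have hsinh : exp (m + x) ^ (p - 1) * exp (m - x) - exp (m + x) * exp (m - x) ^ (p - 1) =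
      2 * exp (p * m) * sinh ((p - 2) * x) := by
    rw [two_mul_exp_mul_sinh, ← exp_mul, ← exp_mul, ← exp_add, ← exp_add]
    congr 2 <;> ring
  have hcosh : exp (m + x) ^ (p - 1) * exp (m - x) + exp (m + x) * exp (m - x) ^ (p - 1) =
      2 * exp (p * m) * cosh ((p - 2) * x) := by
    rw [two_mul_exp_mul_cosh, ← exp_mul, ← exp_mul, ← exp_add, ← exp_add]
    congr 2 <;> ring
  have hcosh' : exp (m + x) ^ p + exp (m - x) ^ p = 2 * exp (p * m) * cosh (p * x) := by
    rw [two_mul_exp_mul_cosh, ← exp_mul, ← exp_mul]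
    congr 2 <;> ring
  have hsinh_sq : p ^ 2 * sinh ((p - 2) * x) ^ 2 ≤ (p - 2) ^ 2 * sinh (p * x) ^ 2 :=
    sq_mul_sinh_sq_le (abs_le.2 ⟨by linarith, by linarith⟩) x
  rw [hsinh, hcosh, hcosh']
  linear_combination (4 * exp (p * m) ^ 2) * hsinh_sq
    - 4 * (p - 2) ^ 2 * exp (p * m) ^ 2 * (cosh_sq (p * x) - cosh_sq ((p - 2) * x))

end Real

lemma sq_mul_sq_le_of_discrim {c s S P Q r i : ℝ}
    (h : c ^ 2 * (r ^ 2 + i ^ 2) * Q ^ 2 ≤ s ^ 2 * (S ^ 2 - (r ^ 2 + i ^ 2) * P ^ 2)) :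
    (c * i * Q) ^ 2 ≤ (s * (S - r * P)) ^ 2 := by
  -- completing the square in `r`
  set D := s ^ 2 * P ^ 2 + c ^ 2 * Q ^ 2
  have hD : D * ((s * (S - r * P)) ^ 2 - (c * i * Q) ^ 2) =
      (D * r - s ^ 2 * S * P) ^ 2 + (c * Q) ^ 2 *
        (s ^ 2 * (S ^ 2 - (r ^ 2 + i ^ 2) * P ^ 2) - c ^ 2 * (r ^ 2 + i ^ 2) * Q ^ 2) := by
    ring
  rcases (by positivity : 0 ≤ D).eq_or_lt with hD0 | hDpos
  · have hcQ : (c * Q) ^ 2 = 0 := by nlinarith [sq_nonneg (s * P), sq_nonneg (c * Q)]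
    calc (c * i * Q) ^ 2 = i ^ 2 * (c * Q) ^ 2 := by ring
      _ = 0 := by rw [hcQ, mul_zero]
      _ ≤ _ := sq_nonneg _
  · have : 0 ≤ D * ((s * (S - r * P)) ^ 2 - (c * i * Q) ^ 2) := by
      rw [hD]
      exact add_nonneg (sq_nonneg _) (mul_nonneg (sq_nonneg _) (sub_nonneg.2 h))
    nlinarith [(mul_nonneg_iff_of_pos_left hDpos).1 this]

/-- For `(c, s)` a positive multiple of `(cos φ, sin φ)` with `0 ≤ φ ≤ π / 2`, the closed sector
`|arg z| ≤ φ`, written with linear inequalities so that it is visibly a convex cone. -/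
def sectorCone (c s : ℝ) : PointedCone ℝ ℂ where
  carrier := {z | 0 ≤ z.re ∧ |c * z.im| ≤ s * z.re}
  zero_mem' := by simp
  add_mem' := by
    rintro z w ⟨hz, hz'⟩ ⟨hw, hw'⟩
    refine ⟨add_nonneg hz hw, ?_⟩
    rw [add_im, add_re, mul_add, mul_add]
    exact (abs_add_le _ _).trans (add_le_add hz' hw')
  smul_mem' := by
    rintro ⟨t, ht⟩ z ⟨hz, hz'⟩
    show 0 ≤ (t • z).re ∧ |c * (t • z).im| ≤ s * (t • z).re
    simp only [smul_re, smul_im, smul_eq_mul]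
    refine ⟨mul_nonneg ht hz, ?_⟩
    rw [mul_left_comm, abs_mul, abs_of_nonneg ht, mul_left_comm]
    exact mul_le_mul_of_nonneg_left hz' ht

lemma mem_sectorCone {c s : ℝ} {z : ℂ} :
    z ∈ sectorCone c s ↔ 0 ≤ z.re ∧ |c * z.im| ≤ s * z.re := Iff.rfl

lemma ofReal_mem_sectorCone {c s x : ℝ} (hs : 0 ≤ s) (hx : 0 ≤ x) :
    (x : ℂ) ∈ sectorCone c s := by
  simp [mem_sectorCone, hx, mul_nonneg hs hx]

lemma sectorCone_subset_sector {c s r : ℝ} (hs : 0 ≤ s) (hr : 0 < r)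
    (hcsr : c ^ 2 + s ^ 2 = r ^ 2) : (sectorCone c s : Set ℂ) ⊆ Sector (Real.arcsin (s / r)) := by
  rintro z ⟨hre, him⟩
  rcases eq_or_ne z 0 with rfl | hz
  · exact Or.inl rfl
  right
  have hsq : (r * |z.im|) ^ 2 ≤ (s * ‖z‖) ^ 2 := by
    have := pow_le_pow_left₀ (abs_nonneg _) him 2
    rw [sq_abs, mul_pow] at this
    rw [mul_pow, mul_pow, sq_abs, ← hcsr, Complex.sq_norm, normSq_apply]
    nlinarith
  have hle : |z.im / ‖z‖| ≤ s / r := by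
    rw [abs_div, abs_norm, div_le_div_iff₀ (norm_pos_iff.2 hz) hr, mul_comm]
    exact (pow_le_pow_iff_left₀ (by positivity) (by positivity) two_ne_zero).1 hsq
  rw [arg_of_re_nonneg hre, abs_le]
  exact ⟨by rw [← Real.arcsin_neg]; exact Real.arcsin_le_arcsin (neg_le_of_abs_le hle),
    Real.arcsin_le_arcsin (le_of_abs_le hle)⟩

lemma sub_mul_sub_conj_mul_mem_sectorCone {c s S α β : ℝ} {μ : ℂ} (hs : 0 ≤ s)
    (hαβ : 0 ≤ α + β) (hS : ‖μ‖ * (α + β) ≤ S)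
    (h : c ^ 2 * ‖μ‖ ^ 2 * (α - β) ^ 2 ≤ s ^ 2 * (S ^ 2 - ‖μ‖ ^ 2 * (α + β) ^ 2)) :
    (S : ℂ) - μ * β - conj μ * α ∈ sectorCone c s := by
  have hre : ((S : ℂ) - μ * β - conj μ * α).re = S - μ.re * (α + β) := by
    simp only [sub_re, ofReal_re, re_mul_ofReal, conj_re]
    ring
  have him : ((S : ℂ) - μ * β - conj μ * α).im = μ.im * (α - β) := by
    simp only [sub_im, ofReal_im, im_mul_ofReal, conj_im]
    ring
  have hnorm : ‖μ‖ ^ 2 = μ.re ^ 2 + μ.im ^ 2 := by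
    rw [Complex.sq_norm, normSq_apply]
    ring
  have hre_nonneg : 0 ≤ S - μ.re * (α + β) := by
    nlinarith [mul_le_mul_of_nonneg_right (re_le_norm μ) hαβ]
  rw [mem_sectorCone, hre, him, ← mul_assoc]
  refine ⟨hre_nonneg, abs_le_of_sq_le_sq ?_ (mul_nonneg hs hre_nonneg)⟩
  rw [hnorm] at h
  exact sq_mul_sq_le_of_discrim h

lemma Fp_eq (p : ℝ) (z : ℂ) : Fp p z = z * ((‖z‖ ^ (p - 2) : ℝ) : ℂ) := by
  unfold Fp
  split_ifs with hz <;> simp [hz]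

lemma mul_conj_Fp {p : ℝ} (hp : p ≠ 0) (z : ℂ) : z * conj (Fp p z) = ((‖z‖ ^ p : ℝ) : ℂ) := by
  rw [Fp_eq, map_mul, conj_ofReal, ← mul_assoc, mul_conj, normSq_eq_norm_sq, ← ofReal_mul,
    ← Real.rpow_natCast, ← Real.rpow_add' (norm_nonneg z) (by simpa using hp)]
  norm_num

noncomputable def pairForm (p : ℝ) (a z w : ℂ) : ℂ :=
  ((‖a‖ * (‖z‖ ^ p + ‖w‖ ^ p) : ℝ) : ℂ) - z * conj (Fp p w) * a - w * conj (Fp p z) * conj a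

lemma pairForm_mem_sectorCone {p : ℝ} (hp : 1 < p) (a z w : ℂ) :
    pairForm p a z w ∈ sectorCone (2 * √(p - 1)) |p - 2| := by
  set A := ‖z‖
  set B := ‖w‖
  set μ := a * z * conj w
  have hT : pairForm p a z w =
      ((‖a‖ * (A ^ p + B ^ p) : ℝ) : ℂ) - μ * (B ^ (p - 2) : ℝ) - conj μ * (A ^ (p - 2) : ℝ) := by
    simp only [pairForm, Fp_eq, μ, map_mul, conj_conj, conj_ofReal]
    ring
  have hμ : ‖μ‖ = ‖a‖ * A * B := by simp [μ, A, B]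
  have hA1 : A ^ (p - 2) * A = A ^ (p - 1) := by
    rw [show p - 2 = p - 1 - 1 by ring, Real.rpow_sub_one_mul_self (norm_nonneg z) (by linarith)]
  have hB1 : B ^ (p - 2) * B = B ^ (p - 1) := by
    rw [show p - 2 = p - 1 - 1 by ring, Real.rpow_sub_one_mul_self (norm_nonneg w) (by linarith)]
  have hP : ‖μ‖ * (A ^ (p - 2) + B ^ (p - 2)) = ‖a‖ * (A ^ (p - 1) * B + A * B ^ (p - 1)) := by
    rw [hμ, ← hA1, ← hB1]
    ring
  have hQ : ‖μ‖ * (A ^ (p - 2) - B ^ (p - 2)) = ‖a‖ * (A ^ (p - 1) * B - A * B ^ (p - 1)) := by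
    rw [hμ, ← hA1, ← hB1]
    ring
  rw [hT]
  refine sub_mul_sub_conj_mul_mem_sectorCone (abs_nonneg _) (by positivity) ?_ ?_
  · rw [hP]
    exact mul_le_mul_of_nonneg_left
      (Real.rpow_sub_one_mul_add_le_rpow_add hp (norm_nonneg z) (norm_nonneg w)) (norm_nonneg a)
  · have hc : (2 * √(p - 1)) ^ 2 = 4 * (p - 1) := by
      rw [mul_pow, Real.sq_sqrt (by linarith)]
      ring
    rw [mul_assoc, ← mul_pow ‖μ‖, hQ, ← mul_pow ‖μ‖, hP, hc, sq_abs]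
    linear_combination ‖a‖ ^ 2 *
      Real.four_mul_sq_rpow_sub_le hp (norm_nonneg z) (norm_nonneg w)

lemma two_smul_form_eq {ι : Type*} [Fintype ι] {p : ℝ} (hp : p ≠ 0) (a : ι → ι → ℂ)
    (d : ι → ℝ) (c : ι → ℂ) (hherm : ∀ j k, a j k = conj (a k j)) :
    (2 : ℝ) • ((∑ j, (d j : ℂ) * c j * conj (Fp p (c j)))
      - ∑ j, ∑ k, c j * conj (Fp p (c k)) * a k j) =
      ∑ j, ((2 * (d j - ∑ k, ‖a k j‖) * ‖c j‖ ^ p : ℝ) : ℂ)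
        + ∑ j, ∑ k, pairForm p (a k j) (c j) (c k) := by
  have hdiag : ∀ j, (d j : ℂ) * c j * conj (Fp p (c j)) = ((d j * ‖c j‖ ^ p : ℝ) : ℂ) := by
    intro j
    rw [mul_assoc, mul_conj_Fp hp, ofReal_mul]
  have hnorm : ∑ j, ∑ k, ‖a k j‖ * ‖c k‖ ^ p = ∑ j, ∑ k, ‖a k j‖ * ‖c j‖ ^ p := by
    rw [Finset.sum_comm]
    exact Finset.sum_congr rfl fun j _ => Finset.sum_congr rfl fun k _ => by
      rw [hherm j k, norm_conj]
  have hconj : ∑ j, ∑ k, c k * conj (Fp p (c j)) * conj (a k j) =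
      ∑ j, ∑ k, c j * conj (Fp p (c k)) * a k j := by
    rw [Finset.sum_comm]
    exact Finset.sum_congr rfl fun j _ => Finset.sum_congr rfl fun k _ => by rw [← hherm]
  have hreal : ∑ j, 2 * (d j - ∑ k, ‖a k j‖) * ‖c j‖ ^ p
      + ∑ j, ∑ k, ‖a k j‖ * (‖c j‖ ^ p + ‖c k‖ ^ p) = 2 * ∑ j, d j * ‖c j‖ ^ p := by
    have hsym : ∑ j, ∑ k, ‖a k j‖ * (‖c j‖ ^ p + ‖c k‖ ^ p) =
        2 * ∑ j, (∑ k, ‖a k j‖) * ‖c j‖ ^ p := by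
      simp only [mul_add, Finset.sum_add_distrib, hnorm, Finset.sum_mul]
      ring
    rw [hsym, Finset.mul_sum, Finset.mul_sum, ← Finset.sum_add_distrib]
    exact Finset.sum_congr rfl fun j _ => by ring
  simp only [pairForm, Finset.sum_sub_distrib, hdiag, hconj, ← ofReal_sum]
  rw [real_smul, mul_sub, ← ofReal_mul, ← hreal, ofReal_add, ofReal_ofNat]
  ring

theorem form_in_sector_general (n : ℕ) (p : ℝ) (hp : 1 < p)
    (a : Fin n → Fin n → ℂ) (d : Fin n → ℝ) (c : Fin n → ℂ)
    (hherm : ∀ j k, a j k = (starRingEnd ℂ) (a k j))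
    (hdom : ∀ j, ∑ k, ‖a k j‖ ≤ d j) :
    (∑ j, ((d j : ℝ) : ℂ) * c j * (starRingEnd ℂ) (Fp p (c j)))
      - (∑ j, ∑ k, c j * (starRingEnd ℂ) (Fp p (c k)) * a k j) ∈
      Sector (Real.arcsin |1 - 2 / p|) := by
  have hp0 : 0 < p := by linarith
  have hs : |1 - 2 / p| = |p - 2| / p := by
    rw [show 1 - 2 / p = (p - 2) / p by field_simp, abs_div, abs_of_pos hp0]
  rw [hs]
  refine sectorCone_subset_sector (c := 2 * √(p - 1)) (abs_nonneg _) hp0 ?_ ?_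
  · rw [mul_pow, Real.sq_sqrt (by linarith), sq_abs]
    ring
  rw [SetLike.mem_coe, ← PointedCone.smul_mem_iff _ two_pos, two_smul_form_eq hp0.ne' a d c hherm]
  refine add_mem (sum_mem fun j _ => ofReal_mem_sectorCone (abs_nonneg _) ?_)
    (sum_mem fun j _ => sum_mem fun k _ => pairForm_mem_sectorCone hp _ _ _)
  exact mul_nonneg (mul_nonneg zero_le_two (sub_nonneg.2 (hdom j))) (by positivity)

theorem form_in_sector (n : ℕ) (p : ℝ) (hp : 1 < p)
    (a : Fin n → Fin n → ℂ) (d : Fin n → ℝ) (c : Fin n → ℂ)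
    (hherm : ∀ j k, a j k = (starRingEnd ℂ) (a k j))
    (hd : ∀ j, 0 ≤ d j)
    (hdom : ∀ j, ∑ k, ‖a k j‖ ≤ d j) :
    (∑ j, ((d j : ℝ) : ℂ) * c j * (starRingEnd ℂ) (Fp p (c j)))
      - (∑ j, ∑ k, c j * (starRingEnd ℂ) (Fp p (c k)) * a k j) ∈
      Sector (Real.arcsin |1 - 2 / p|) :=
  form_in_sector_general n p hp a d c hherm hdom
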